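/- arXiv:1912.02503 — 6 statements merged into one kernel-verified Lean document; each statement's English description precedes it below -/
import Mathlib

section
/- Let Z be a real random variable taking finitely many values on a finite probability space, and A0 a random action with P(A0 = a) = π(a|x) > 0. Define h_z(a|x,z) := P(A0 = a | Z = z) for z with P(Z = z) > 0. Then the conditional expectation of Z given A0 = a satisfies E[Z | A0 = a] = E[ Z · h_z(a|x,Z) / π(a|x) ]. -/
open Finset
open scoped Classical

/-!
Split every expectation along the level sets `{Z = z}`. On a level set of positive mass,
Bayes' rule `P(Z = z) · P(A | Z = z) = P(A ∩ {Z = z})` turns the reweighted integrand into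
the restriction to `A`; a level set of mass zero contributes nothing to either side, whatever
value the hindsight ratio takes there.
-/

section Hindsight

variable {Ω β : Type*} [Fintype Ω] [DecidableEq Ω] [DecidableEq β]
  {p : Ω → ℝ} {Z : Ω → β} {E : Finset Ω} {h : β → ℝ}

theorem fiber_mass_mul_cond_eq (hp : ∀ ω, 0 ≤ p ω)
    (hh : ∀ z, 0 < ∑ ω ∈ univ.filter (fun ω' => Z ω' = z), p ω →
      h z = (∑ ω ∈ E ∩ univ.filter (fun ω' => Z ω' = z), p ω) /
        (∑ ω ∈ univ.filter (fun ω' => Z ω' = z), p ω)) (z : β) :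
    (∑ ω ∈ univ.filter (fun ω' => Z ω' = z), p ω) * h z =
      ∑ ω ∈ E ∩ univ.filter (fun ω' => Z ω' = z), p ω := by
  set F := univ.filter (fun ω' => Z ω' = z)
  rcases (sum_nonneg fun ω _ => hp ω : 0 ≤ ∑ ω ∈ F, p ω).lt_or_eq with hpos | hzero
  · rw [hh z hpos, mul_div_cancel₀ _ hpos.ne']
  · have hle : ∑ ω ∈ E ∩ F, p ω ≤ ∑ ω ∈ F, p ω :=
      sum_le_sum_of_subset_of_nonneg inter_subset_right fun ω _ _ => hp ω
    have hge : 0 ≤ ∑ ω ∈ E ∩ F, p ω := sum_nonneg fun ω _ => hp ω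
    rw [← hzero]
    linarith

theorem sum_mul_comp_mul_cond_eq_sum (hp : ∀ ω, 0 ≤ p ω)
    (hh : ∀ z, 0 < ∑ ω ∈ univ.filter (fun ω' => Z ω' = z), p ω →
      h z = (∑ ω ∈ E ∩ univ.filter (fun ω' => Z ω' = z), p ω) /
        (∑ ω ∈ univ.filter (fun ω' => Z ω' = z), p ω)) (g : β → ℝ) :
    ∑ ω, p ω * (g (Z ω) * h (Z ω)) = ∑ ω ∈ E, p ω * g (Z ω) := by
  have hmaps : ∀ s : Finset Ω, ∀ ω ∈ s, Z ω ∈ univ.image Z :=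
    fun _ ω _ => mem_image_of_mem Z (mem_univ ω)
  rw [← sum_fiberwise_of_maps_to (hmaps univ), ← sum_fiberwise_of_maps_to (hmaps E)]
  refine sum_congr rfl fun z _ => ?_
  calc ∑ ω ∈ univ.filter (fun ω' => Z ω' = z), p ω * (g (Z ω) * h (Z ω))
      = g z * ((∑ ω ∈ univ.filter (fun ω' => Z ω' = z), p ω) * h z) := by
        rw [sum_mul, mul_sum]
        refine sum_congr rfl fun ω hω => ?_
        rw [(mem_filter.mp hω).2]
        ring
    _ = g z * ∑ ω ∈ E.filter (fun ω' => Z ω' = z), p ω := by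
        rw [fiber_mass_mul_cond_eq hp hh, inter_filter, inter_univ]
    _ = ∑ ω ∈ E.filter (fun ω' => Z ω' = z), p ω * g (Z ω) := by
        rw [mul_sum]
        refine sum_congr rfl fun ω hω => ?_
        rw [(mem_filter.mp hω).2]
        ring

end Hindsight

theorem stmt_3_general {Ω : Type*} [Fintype Ω] [DecidableEq Ω] (p : Ω → ℝ)
    (hp : ∀ ω, 0 ≤ p ω)
    (Z : Ω → ℝ) (EA : Finset Ω) (πa : ℝ)
    (hz : ℝ → ℝ)
    (hzdef : ∀ z, 0 < ∑ ω ∈ univ.filter (fun ω' => Z ω' = z), p ω →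
      hz z = (∑ ω ∈ EA ∩ univ.filter (fun ω' => Z ω' = z), p ω) /
             (∑ ω ∈ univ.filter (fun ω' => Z ω' = z), p ω)) :
    (∑ ω ∈ EA, p ω * Z ω) / πa = ∑ ω, p ω * (Z ω * hz (Z ω) / πa) := by
  simp_rw [mul_div_assoc', ← sum_div]
  exact congrArg (· / πa) (sum_mul_comp_mul_cond_eq_sum hp hzdef id).symm

/-- Return-conditional hindsight Q-function (Statement 3):
`E[Z | A₀ = a] = E[ Z · hz(Z) / πa ]`, where `hz z = P(A₀ = a | Z = z)`
and `πa = P(A₀ = a) > 0`, on a finite probability space. -/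
theorem stmt_3 {Ω : Type*} [Fintype Ω] [DecidableEq Ω] (p : Ω → ℝ)
    (hp : ∀ ω, 0 ≤ p ω) (hsum : ∑ ω, p ω = 1)
    (Z : Ω → ℝ) (EA : Finset Ω) (πa : ℝ)
    (hπ : πa = ∑ ω ∈ EA, p ω) (hπpos : 0 < πa)
    (hz : ℝ → ℝ)
    (hzdef : ∀ z, 0 < ∑ ω ∈ univ.filter (fun ω' => Z ω' = z), p ω →
      hz z = (∑ ω ∈ EA ∩ univ.filter (fun ω' => Z ω' = z), p ω) /
             (∑ ω ∈ univ.filter (fun ω' => Z ω' = z), p ω)) :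
    (∑ ω ∈ EA, p ω * Z ω) / πa = ∑ ω, p ω * (Z ω * hz (Z ω) / πa) :=
  stmt_3_general p hp Z EA πa hz hzdef
end

section
/- With the hypotheses of the return-conditional hindsight theorems (finite probability space, Z a finitely-valued real random variable, P(A0=a) = π(a|x) > 0, and h_z(a|x,z) = P(A0=a | Z=z) > 0 for all attainable z), the advantage satisfies A^π(x,a) := E[Z | A0=a] − E[Z] = E[ (1 − π(a|x)/h_z(a|x,Z)) · Z | A0 = a ]. -/
open Finset
open scoped Classical

/-- Return-conditional hindsight advantage (Statement 4):
`A^π(x,a) := E[Z | A₀ = a] − E[Z] = E[ (1 − πa / hz(Z)) · Z | A₀ = a ]`,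
where `hz z = P(A₀ = a | Z = z) > 0` for all attainable `z`, and
`πa = P(A₀ = a) > 0`, on a finite probability space. -/
theorem stmt_4 {Ω : Type*} [Fintype Ω] [DecidableEq Ω] (p : Ω → ℝ)
    (hp : ∀ ω, 0 ≤ p ω) (hsum : ∑ ω, p ω = 1)
    (Z : Ω → ℝ) (EA : Finset Ω) (πa : ℝ)
    (hπ : πa = ∑ ω ∈ EA, p ω) (hπpos : 0 < πa)
    (hz : ℝ → ℝ)
    (hzdef : ∀ z, 0 < ∑ ω ∈ univ.filter (fun ω' => Z ω' = z), p ω →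
      hz z = (∑ ω ∈ EA ∩ univ.filter (fun ω' => Z ω' = z), p ω) /
             (∑ ω ∈ univ.filter (fun ω' => Z ω' = z), p ω))
    (hzpos : ∀ z, 0 < ∑ ω ∈ univ.filter (fun ω' => Z ω' = z), p ω → 0 < hz z) :
    (∑ ω ∈ EA, p ω * Z ω) / πa - ∑ ω, p ω * Z ω
      = (∑ ω ∈ EA, p ω * ((1 - πa / hz (Z ω)) * Z ω)) / πa := by
  have hπne : πa ≠ 0 := ne_of_gt hπpos
  have key : ∑ ω ∈ EA, p ω * (Z ω / hz (Z ω)) = ∑ ω, p ω * Z ω := by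
    rw [← Finset.sum_fiberwise_of_maps_to (g := Z) (t := Finset.univ.image Z)
          (fun ω _ => Finset.mem_image_of_mem Z (Finset.mem_univ ω))
          (fun ω => p ω * Z ω),
        ← Finset.sum_fiberwise_of_maps_to (g := Z) (t := Finset.univ.image Z)
          (s := EA)
          (fun ω _ => Finset.mem_image_of_mem Z (Finset.mem_univ ω))
          (fun ω => p ω * (Z ω / hz (Z ω)))]
    refine Finset.sum_congr rfl fun z _ => ?_
    have h1 : ∑ ω ∈ EA.filter (fun ω => Z ω = z), p ω * (Z ω / hz (Z ω))
        = (z / hz z) * ∑ ω ∈ EA ∩ univ.filter (fun ω' => Z ω' = z), p ω := by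
      rw [Finset.mul_sum]
      have : EA ∩ univ.filter (fun ω' => Z ω' = z) = EA.filter (fun ω => Z ω = z) := by
        ext ω; simp [Finset.mem_filter, Finset.mem_inter]
      rw [this]
      refine Finset.sum_congr rfl fun ω hω => ?_
      have hzω : Z ω = z := (Finset.mem_filter.mp hω).2
      rw [hzω]; ring
    have h2 : ∑ ω ∈ univ.filter (fun ω => Z ω = z), p ω * Z ω
        = z * ∑ ω ∈ univ.filter (fun ω' => Z ω' = z), p ω := by
      rw [Finset.mul_sum]
      refine Finset.sum_congr rfl fun ω hω => ?_
      have hzω : Z ω = z := (Finset.mem_filter.mp hω).2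
      rw [hzω]; ring
    rw [h1, h2]
    rcases lt_or_eq_of_le (Finset.sum_nonneg fun ω _ => hp ω :
        (0:ℝ) ≤ ∑ ω ∈ univ.filter (fun ω' => Z ω' = z), p ω) with hpos | hzero
    · have hd := hzdef z hpos
      have hzp := hzpos z hpos
      have hSApos : 0 < ∑ ω ∈ EA ∩ univ.filter (fun ω' => Z ω' = z), p ω := by
        by_contra hc
        push_neg at hc
        have h0 : ∑ ω ∈ EA ∩ univ.filter (fun ω' => Z ω' = z), p ω = 0 :=
          le_antisymm hc (Finset.sum_nonneg fun ω _ => hp ω)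
        rw [hd, h0] at hzp
        simp at hzp
      rw [hd]
      field_simp
    · have hall : ∀ ω ∈ univ.filter (fun ω' => Z ω' = z), p ω = 0 :=
        (Finset.sum_eq_zero_iff_of_nonneg fun ω _ => hp ω).mp hzero.symm
      have hSA0 : ∑ ω ∈ EA ∩ univ.filter (fun ω' => Z ω' = z), p ω = 0 :=
        Finset.sum_eq_zero fun ω hω => hall ω (Finset.mem_inter.mp hω).2
      rw [hSA0, ← hzero]
      ring
  have expand : ∑ ω ∈ EA, p ω * ((1 - πa / hz (Z ω)) * Z ω)
      = ∑ ω ∈ EA, p ω * Z ω - πa * ∑ ω ∈ EA, p ω * (Z ω / hz (Z ω)) := by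
    rw [Finset.mul_sum, ← Finset.sum_sub_distrib]
    refine Finset.sum_congr rfl fun ω _ => ?_
    ring
  rw [expand, key]
  field_simp
end

section
/- Let events {A0 = a} and {k ∼ ρ} be independent on a finite (or countable, with geometric time distribution) probability space, where ρ(k) = β^{k−1}(1−β) for k ≥ 1 and β ∈ (0,1). Define h_β(a|x,y) := P(A0 = a | X_K = y), where K ∼ ρ is drawn independently of the trajectory. Then for any x, a with π(a|x) > 0 and β = γ: Q^π(x,a) = r(x,a) + E_{τ∼T(x,π)}[ Σ_{k≥1} γ^k (h_β(a|x,X_k)/π(a|x)) r^π(X_k) ]. -/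
open Finset

/-!
With `K ∼ ρ` geometric and independent of the trajectory, `P(X_K = y)` is the fixed multiple
`(1 - γ) / γ` of the discounted occupancy `∑_{k ≥ 1} γ^k P(X_k = y)`, both with and without
conditioning on `A₀ = a`. So Bayes' rule makes `hβ(y) / π(a|x)` the ratio of the two discounted
occupancies of `y`, and reweighting the unconditioned occupancy by it gives back the conditioned
one; summing against `r^π` gives the theorem.
-/

noncomputable def discountedSum (γ : ℝ) (f : ℕ → ℝ) : ℝ :=
  ∑' k, γ ^ (k + 1) * f (k + 1)

section DiscountedSum

variable {γ : ℝ} {f g : ℕ → ℝ}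

theorem le_one_of_sum_eq_one {X : Type*} [Fintype X] {p : X → ℝ} (h0 : ∀ y, 0 ≤ p y)
    (h1 : ∑ y, p y = 1) (y : X) : p y ≤ 1 :=
  h1 ▸ single_le_sum (fun y _ => h0 y) (mem_univ y)

theorem summable_pow_succ_mul (hγ0 : 0 ≤ γ) (hγ1 : γ < 1) (h0 : ∀ k, 0 ≤ f k)
    (h1 : ∀ k, f k ≤ 1) : Summable fun k => γ ^ (k + 1) * f (k + 1) := by
  have hsum : Summable fun k => γ ^ k * f k :=
    (summable_geometric_of_lt_one hγ0 hγ1).of_nonneg_of_le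
      (fun k => mul_nonneg (pow_nonneg hγ0 k) (h0 k))
      (fun k => mul_le_of_le_one_right (pow_nonneg hγ0 k) (h1 k))
  exact (summable_nat_add_iff 1).2 hsum

theorem discountedSum_nonneg (hγ : 0 ≤ γ) (hf : ∀ k, 0 ≤ f k) : 0 ≤ discountedSum γ f :=
  tsum_nonneg fun _ => mul_nonneg (pow_nonneg hγ _) (hf _)

theorem discountedSum_eq_zero_of_dominated (hγ : 0 < γ) (hf0 : ∀ k, 0 ≤ f k)
    (hf : Summable fun k => γ ^ (k + 1) * f (k + 1)) (hdom : ∀ k, f k = 0 → g k = 0)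
    (h : discountedSum γ f = 0) : discountedSum γ g = 0 := by
  rw [discountedSum] at h
  have hterms : (fun k => γ ^ (k + 1) * f (k + 1)) = 0 :=
    (hasSum_zero_iff_of_nonneg fun _ => mul_nonneg (pow_nonneg hγ.le _) (hf0 _)).1
      (h ▸ hf.hasSum)
  have hg : ∀ k, g (k + 1) = 0 := fun k =>
    hdom _ ((mul_eq_zero.1 (congrFun hterms k)).resolve_left (pow_ne_zero _ hγ.ne'))
  simp [discountedSum, hg]

/-- The identity `c_γ ρ(k) = γ^k`, summed. -/
theorem mul_tsum_geometric_mul {ρ : ℕ → ℝ} (hρ0 : ρ 0 = 0)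
    (hρ : ∀ k, 1 ≤ k → ρ k = γ ^ (k - 1) * (1 - γ)) (f : ℕ → ℝ) :
    γ * ∑' k, ρ k * f k = (1 - γ) * discountedSum γ f := by
  have hshift : ∑' k, ρ (k + 1) * f (k + 1) = ∑' k, ρ k * f k := by
    refine Nat.succ_injective.tsum_eq (f := fun k => ρ k * f k) fun k hk => ?_
    cases k with
    | zero => simp [hρ0] at hk
    | succ k => exact ⟨k, rfl⟩
  rw [← hshift, discountedSum, ← tsum_mul_left, ← tsum_mul_left]
  refine tsum_congr fun k => ?_
  rw [hρ (k + 1) k.succ_pos, Nat.add_sub_cancel]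
  ring

theorem tsum_geometric_mul_div (hγ0 : γ ≠ 0) (hγ1 : γ ≠ 1) {ρ : ℕ → ℝ} (hρ0 : ρ 0 = 0)
    (hρ : ∀ k, 1 ≤ k → ρ k = γ ^ (k - 1) * (1 - γ)) (f g : ℕ → ℝ) :
    (∑' k, ρ k * g k) / ∑' k, ρ k * f k
      = discountedSum γ g / discountedSum γ f := by
  rw [← mul_div_mul_left _ _ hγ0, mul_tsum_geometric_mul hρ0 hρ,
    mul_tsum_geometric_mul hρ0 hρ, mul_div_mul_left _ _ (sub_ne_zero.2 hγ1.symm)]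

theorem tsum_pow_succ_mul_sum {X : Type*} [Fintype X] {Q : ℕ → X → ℝ}
    (hQ : ∀ y, Summable fun k => γ ^ (k + 1) * Q (k + 1) y) (w : X → ℝ) :
    ∑' k, γ ^ (k + 1) * ∑ y, Q (k + 1) y * w y
      = ∑ y, discountedSum γ (fun k => Q k y) * w y := by
  simp_rw [mul_sum, discountedSum, ← tsum_mul_right, ← mul_assoc]
  exact Summable.tsum_finsetSum fun y _ => (hQ y).mul_right (w y)

end DiscountedSum

theorem stmt_7_general {X : Type*} [Fintype X]
    (γ : ℝ) (hγ0 : 0 < γ) (hγ1 : γ < 1)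
    (πa : ℝ) (hπpos : 0 < πa)
    (rxa : ℝ) (rπ : X → ℝ)
    (Pk PkA : ℕ → X → ℝ)
    (hPk_nonneg : ∀ k y, 0 ≤ Pk k y) (hPkA_nonneg : ∀ k y, 0 ≤ PkA k y)
    (hPk_sum : ∀ k, ∑ y, Pk k y = 1) (hPkA_sum : ∀ k, ∑ y, PkA k y = 1)
    (hdom : ∀ k y, Pk k y = 0 → PkA k y = 0)
    (ρ : ℕ → ℝ) (hρ0 : ρ 0 = 0)
    (hρ : ∀ k, 1 ≤ k → ρ k = γ ^ (k - 1) * (1 - γ))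
    (hβ : X → ℝ)
    (hβdef : ∀ y, 0 < ∑' k : ℕ, ρ k * Pk k y →
      hβ y = πa * (∑' k : ℕ, ρ k * PkA k y) / (∑' k : ℕ, ρ k * Pk k y)) :
    rxa + ∑' k : ℕ, γ ^ (k + 1) * ∑ y, PkA (k + 1) y * rπ y
      = rxa + ∑' k : ℕ, γ ^ (k + 1) * ∑ y, Pk (k + 1) y * (hβ y / πa) * rπ y := by
  have hsummable : ∀ P : ℕ → X → ℝ, (∀ k y, 0 ≤ P k y) → (∀ k, ∑ y, P k y = 1) →
      ∀ y, Summable fun k => γ ^ (k + 1) * P (k + 1) y := fun P h0 h1 y =>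
    summable_pow_succ_mul hγ0.le hγ1 (fun k => h0 k y)
      (fun k => le_one_of_sum_eq_one (h0 k) (h1 k) y)
  have hratio : ∀ y, discountedSum γ (fun k => Pk k y) * (hβ y / πa)
      = discountedSum γ (fun k => PkA k y) := by
    intro y
    rcases (discountedSum_nonneg hγ0.le fun k => hPk_nonneg k y).eq_or_lt with hD | hD
    · rw [← hD, zero_mul, eq_comm]
      exact discountedSum_eq_zero_of_dominated hγ0 (fun k => hPk_nonneg k y)
        (hsummable Pk hPk_nonneg hPk_sum y) (fun k => hdom k y) hD.symm
    · have hS : 0 < ∑' k, ρ k * Pk k y := by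
        refine pos_of_mul_pos_right ?_ hγ0.le
        rw [mul_tsum_geometric_mul hρ0 hρ]
        exact mul_pos (sub_pos.2 hγ1) hD
      rw [hβdef y hS, mul_div_assoc, mul_div_cancel_left₀ _ hπpos.ne',
        tsum_geometric_mul_div hγ0.ne' hγ1.ne hρ0 hρ, mul_div_cancel₀ _ hD.ne']
  simp_rw [mul_assoc (Pk _ _), tsum_pow_succ_mul_sum (hsummable PkA hPkA_nonneg hPkA_sum),
    tsum_pow_succ_mul_sum (hsummable Pk hPk_nonneg hPk_sum), ← mul_assoc, hratio]

/-- Time-independent state-conditional HCA (Appendix Theorem 6 / Statement 7).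
In a finite MDP with discount `γ ∈ (0,1)` and `β = γ`, let
`ρ k = β^(k−1)(1−β)` for `k ≥ 1` be the geometric time distribution, drawn
independently of the trajectory (so `P(X_K = y | A₀ = a, K∼ρ) = Σ_k ρ k ·
P(X_k = y | A₀ = a)`), and let
`hβ y = P(A₀ = a | X_K = y, K∼ρ)` be given by Bayes' rule.
Then for `π(a|x) = πa > 0`:
`Q^π(x,a) = r(x,a) + E_{τ∼T(x,π)}[Σ_{k≥1} γ^k (hβ(a|x,X_k)/π(a|x)) r^π(X_k)]`. -/
theorem stmt_7 {X : Type*} [Fintype X]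
    (γ : ℝ) (hγ0 : 0 < γ) (hγ1 : γ < 1)
    (πa : ℝ) (hπpos : 0 < πa) (hπle : πa ≤ 1)
    (rxa : ℝ) (rπ : X → ℝ)
    (Pk PkA : ℕ → X → ℝ)
    (hPk_nonneg : ∀ k y, 0 ≤ Pk k y) (hPkA_nonneg : ∀ k y, 0 ≤ PkA k y)
    (hPk_sum : ∀ k, ∑ y, Pk k y = 1) (hPkA_sum : ∀ k, ∑ y, PkA k y = 1)
    (hdom : ∀ k y, Pk k y = 0 → PkA k y = 0)
    (ρ : ℕ → ℝ) (hρ0 : ρ 0 = 0)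
    (hρ : ∀ k, 1 ≤ k → ρ k = γ ^ (k - 1) * (1 - γ))
    (hβ : X → ℝ)
    (hβdef : ∀ y, 0 < ∑' k : ℕ, ρ k * Pk k y →
      hβ y = πa * (∑' k : ℕ, ρ k * PkA k y) / (∑' k : ℕ, ρ k * Pk k y)) :
    rxa + ∑' k : ℕ, γ ^ (k + 1) * ∑ y, PkA (k + 1) y * rπ y
      = rxa + ∑' k : ℕ, γ ^ (k + 1) * ∑ y, Pk (k + 1) y * (hβ y / πa) * rπ y :=
  stmt_7_general γ hγ0 hγ1 πa hπpos rxa rπ Pk PkA hPk_nonneg hPkA_nonneg hPk_sum hPkA_sum hdom ρ hρ0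
    hρ hβ hβdef
end

section
/- Let Ω be a finite probability space with random variables A0 ∈ A (finite) and Y ∈ X (finite), P(A0 = a) = π(a) > 0, and define h(a|y) = P(A0 = a | Y = y) for y with P(Y = y) > 0. Then for any reward function r : X → ℝ: E[ (h(a|Y)/π(a)) · r(Y) ] = E[ r(Y) | A0 = a ]. In particular, if A0 and Y are independent then h(a|y) = π(a) for all valid y and both sides equal E[r(Y)]. -/
open Finset
open scoped Classical

/-!
Group the sum over `Ω` by the value `y` of `Y`. On a fibre of positive mass, the fibre mass
times `h(a|y)` is the mass of `{A₀ = a, Y = y}` by the definition of `h`; on a null fibre both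
are `0`, since `{A₀ = a, Y = y}` is contained in it and `p ≥ 0`. Hence `E[h(a|Y) r(Y)]` equals
`E[1{A₀ = a} r(Y)]`, and dividing by `π(a)` gives the first claim. Under independence the mass of
`{A₀ = a, Y = y}` factors as `π(a) P(Y = y)`, so `h(a|y) = π(a)` and the first claim collapses to
`E[r(Y)]`.
-/

section Fibres

variable {Ω X : Type*}

theorem sum_mul_comp_eq_sum_fibre_mul {R : Type*} [CommSemiring R] [Fintype X] (s : Finset Ω)
    (p : Ω → R) (Y : Ω → X) (f : X → R) :
    ∑ ω ∈ s, p ω * f (Y ω) = ∑ y, (∑ ω ∈ s.filter (fun ω' => Y ω' = y), p ω) * f y := by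
  rw [← sum_fiberwise s Y]
  refine sum_congr rfl fun y _ => ?_
  rw [sum_mul]
  exact sum_congr rfl fun ω hω => by rw [(mem_filter.1 hω).2]

theorem sum_filter_mul_comp_eq_mul_of_indep {R : Type*} [CommSemiring R] [Fintype Ω] [Fintype X]
    {p : Ω → R} (E : Ω → Prop) (Y : Ω → X) (c : R)
    (hind : ∀ y, ∑ ω ∈ univ.filter (fun ω' => E ω' ∧ Y ω' = y), p ω
      = c * ∑ ω ∈ univ.filter (fun ω' => Y ω' = y), p ω)
    (r : X → R) :
    ∑ ω ∈ univ.filter E, p ω * r (Y ω) = c * ∑ ω, p ω * r (Y ω) := by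
  rw [sum_mul_comp_eq_sum_fibre_mul _ p Y r, sum_mul_comp_eq_sum_fibre_mul univ p Y r, mul_sum]
  refine sum_congr rfl fun y _ => ?_
  rw [filter_filter, hind y, mul_assoc]

variable {𝕜 : Type*} [Field 𝕜] [LinearOrder 𝕜] [IsStrictOrderedRing 𝕜] [Fintype Ω]

theorem sum_filter_and_eq_zero_of_sum_filter_eq_zero {p : Ω → 𝕜} (hp : ∀ ω, 0 ≤ p ω)
    (E : Ω → Prop) (Y : Ω → X) {y : X}
    (hy : ∑ ω ∈ univ.filter (fun ω' => Y ω' = y), p ω = 0) :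
    ∑ ω ∈ univ.filter (fun ω' => E ω' ∧ Y ω' = y), p ω = 0 := by
  refine le_antisymm ?_ (sum_nonneg fun ω _ => hp ω)
  calc ∑ ω ∈ univ.filter (fun ω' => E ω' ∧ Y ω' = y), p ω
      ≤ ∑ ω ∈ univ.filter (fun ω' => Y ω' = y), p ω :=
        sum_le_sum_of_subset_of_nonneg (monotone_filter_right _ fun _ _ h => h.2)
          fun ω _ _ => hp ω
    _ = 0 := hy

theorem sum_filter_mul_cond_eq_sum_filter_and {p : Ω → 𝕜} (hp : ∀ ω, 0 ≤ p ω)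
    (E : Ω → Prop) (Y : Ω → X) (h : X → 𝕜)
    (hdef : ∀ y, 0 < ∑ ω ∈ univ.filter (fun ω' => Y ω' = y), p ω →
      h y = (∑ ω ∈ univ.filter (fun ω' => E ω' ∧ Y ω' = y), p ω) /
        (∑ ω ∈ univ.filter (fun ω' => Y ω' = y), p ω))
    (y : X) :
    (∑ ω ∈ univ.filter (fun ω' => Y ω' = y), p ω) * h y
      = ∑ ω ∈ univ.filter (fun ω' => E ω' ∧ Y ω' = y), p ω := by
  rcases (sum_nonneg fun ω _ => hp ω :
      0 ≤ ∑ ω ∈ univ.filter (fun ω' => Y ω' = y), p ω).lt_or_eq with hpos | hnull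
  · rw [hdef y hpos, mul_div_cancel₀ _ hpos.ne']
  · rw [← hnull, zero_mul, sum_filter_and_eq_zero_of_sum_filter_eq_zero hp E Y hnull.symm]

theorem sum_mul_cond_mul_comp_eq_sum_filter [Fintype X] {p : Ω → 𝕜} (hp : ∀ ω, 0 ≤ p ω)
    (E : Ω → Prop) (Y : Ω → X) (h : X → 𝕜)
    (hdef : ∀ y, 0 < ∑ ω ∈ univ.filter (fun ω' => Y ω' = y), p ω →
      h y = (∑ ω ∈ univ.filter (fun ω' => E ω' ∧ Y ω' = y), p ω) /
        (∑ ω ∈ univ.filter (fun ω' => Y ω' = y), p ω))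
    (r : X → 𝕜) :
    ∑ ω, p ω * (h (Y ω) * r (Y ω)) = ∑ ω ∈ univ.filter E, p ω * r (Y ω) := by
  rw [sum_mul_comp_eq_sum_fibre_mul univ p Y (fun y => h y * r y),
    sum_mul_comp_eq_sum_fibre_mul _ p Y r]
  refine sum_congr rfl fun y _ => ?_
  rw [← mul_assoc, sum_filter_mul_cond_eq_sum_filter_and hp E Y h hdef y, filter_filter]

end Fibres

theorem stmt_11_general {Ω A X : Type*} [Fintype Ω] [Fintype X]
    (p : Ω → ℝ) (hp : ∀ ω, 0 ≤ p ω)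
    (A0 : Ω → A) (Y : Ω → X) (a : A) (π : A → ℝ)
    (hπpos : 0 < π a)
    (h : A → X → ℝ)
    (hdef : ∀ a' y, 0 < ∑ ω ∈ univ.filter (fun ω' => Y ω' = y), p ω →
      h a' y = (∑ ω ∈ univ.filter (fun ω' => A0 ω' = a' ∧ Y ω' = y), p ω) /
               (∑ ω ∈ univ.filter (fun ω' => Y ω' = y), p ω))
    (r : X → ℝ) :
    (∑ ω, p ω * (h a (Y ω) / π a * r (Y ω))
        = (∑ ω ∈ univ.filter (fun ω' => A0 ω' = a), p ω * r (Y ω)) / π a) ∧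
    ((∀ a' y, (∑ ω ∈ univ.filter (fun ω' => A0 ω' = a' ∧ Y ω' = y), p ω)
        = π a' * ∑ ω ∈ univ.filter (fun ω' => Y ω' = y), p ω) →
      (∀ y, 0 < ∑ ω ∈ univ.filter (fun ω' => Y ω' = y), p ω → h a y = π a) ∧
      ∑ ω, p ω * (h a (Y ω) / π a * r (Y ω)) = ∑ ω, p ω * r (Y ω)) := by
  have reweight : ∑ ω, p ω * (h a (Y ω) / π a * r (Y ω))
      = (∑ ω ∈ univ.filter (fun ω' => A0 ω' = a), p ω * r (Y ω)) / π a := by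
    rw [← sum_mul_cond_mul_comp_eq_sum_filter hp _ Y (h a) (hdef a) r, sum_div]
    exact sum_congr rfl fun ω _ => by ring
  refine ⟨reweight, fun hind => ⟨fun y hy => ?_, ?_⟩⟩
  · rw [hdef a y hy, hind a y, mul_div_cancel_right₀ _ hy.ne']
  · rw [reweight, sum_filter_mul_comp_eq_mul_of_indep _ Y (π a) (hind a) r,
      mul_div_cancel_left₀ _ hπpos.ne']

/-- Single-step state-conditional HCA (Statement 11):
`E[ (h(a|Y)/π(a)) · r(Y) ] = E[ r(Y) | A₀ = a ]` on a finite probability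
space, where `π a = P(A₀ = a) > 0` and `h a y = P(A₀ = a | Y = y)`.
In particular, if `A₀` and `Y` are independent then `h a y = π a` for every
`y` with `P(Y = y) > 0` and both sides equal `E[r(Y)]`. -/
theorem stmt_11 {Ω A X : Type*} [Fintype Ω] [Fintype A] [Fintype X]
    (p : Ω → ℝ) (hp : ∀ ω, 0 ≤ p ω) (hsum : ∑ ω, p ω = 1)
    (A0 : Ω → A) (Y : Ω → X) (a : A) (π : A → ℝ)
    (hπ : ∀ a', π a' = ∑ ω ∈ univ.filter (fun ω' => A0 ω' = a'), p ω)
    (hπpos : 0 < π a)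
    (h : A → X → ℝ)
    (hdef : ∀ a' y, 0 < ∑ ω ∈ univ.filter (fun ω' => Y ω' = y), p ω →
      h a' y = (∑ ω ∈ univ.filter (fun ω' => A0 ω' = a' ∧ Y ω' = y), p ω) /
               (∑ ω ∈ univ.filter (fun ω' => Y ω' = y), p ω))
    (r : X → ℝ) :
    (∑ ω, p ω * (h a (Y ω) / π a * r (Y ω))
        = (∑ ω ∈ univ.filter (fun ω' => A0 ω' = a), p ω * r (Y ω)) / π a) ∧
    ((∀ a' y, (∑ ω ∈ univ.filter (fun ω' => A0 ω' = a' ∧ Y ω' = y), p ω)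
        = π a' * ∑ ω ∈ univ.filter (fun ω' => Y ω' = y), p ω) →
      (∀ y, 0 < ∑ ω ∈ univ.filter (fun ω' => Y ω' = y), p ω → h a y = π a) ∧
      ∑ ω, p ω * (h a (Y ω) / π a * r (Y ω)) = ∑ ω, p ω * r (Y ω)) :=
  stmt_11_general p hp A0 Y a π hπpos h hdef r
end

section
/- Let Ω be a finite probability space with A0 ∈ A and Z ∈ ℝ (finitely many values), P(A0 = a) = π(a) > 0 for all a, and h(a|z) = P(A0 = a | Z = z) > 0 for all z in the support of Z. Then Σ_a π(a) · E[ (1 − π(a)/h(a|Z)) · Z | A0 = a ] = 0; i.e., the hindsight advantages A^z(x,a) = E[(1 − π(a)/h(a|Z)) Z | A0 = a] average to zero under the policy. -/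
/-!
Averaging the conditional expectations against `π` turns the left-hand side into
`E[Z] - E[(π(A₀)/h(A₀|Z)) Z]`. On each level set `{Z = z}` of positive mass, Bayes' rule
`P(A₀ = a, Z = z) = h(a|z) P(Z = z)` makes the importance weight `π(a)/h(a|z)` integrate to
`Σ_a π(a) P(Z = z) = P(Z = z)`, so the two expectations agree; null level sets contribute nothing.
-/

open Finset
open scoped Classical

section

variable {Ω A B : Type*}

theorem sum_mul_sum_fiber_div_cancel [Fintype Ω] [Fintype A] (π : A → ℝ) (hπ : ∀ a, π a ≠ 0)
    (A0 : Ω → A) (f : A → Ω → ℝ) :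
    ∑ a, π a * ((∑ ω ∈ univ.filter (fun ω' => A0 ω' = a), f a ω) / π a) =
      ∑ ω, f (A0 ω) ω := by
  simp_rw [mul_div_cancel₀ _ (hπ _)]
  rw [← sum_fiberwise univ A0 fun ω => f (A0 ω) ω]
  refine sum_congr rfl fun a _ => sum_congr rfl fun ω hω => ?_
  rw [(mem_filter.1 hω).2]

theorem sum_mul_eq_zero_of_sum_eq_zero {s : Finset Ω} {p : Ω → ℝ} (hp : ∀ ω ∈ s, 0 ≤ p ω)
    (hs : ∑ ω ∈ s, p ω = 0) (f : Ω → ℝ) : ∑ ω ∈ s, p ω * f ω = 0 :=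
  sum_eq_zero fun ω hω => by rw [(sum_eq_zero_iff_of_nonneg hp).1 hs ω hω, zero_mul]

theorem sum_filter_mul_prior_div_posterior [Fintype Ω] [Fintype A] (p : Ω → ℝ) (A0 : Ω → A)
    (Z : Ω → B) (π : A → ℝ) (hπ : ∑ a, π a = 1) (h : A → B → ℝ) (z : B) (hh : ∀ a, h a z ≠ 0)
    (hbayes : ∀ a, ∑ ω ∈ univ.filter (fun ω' => A0 ω' = a ∧ Z ω' = z), p ω =
      h a z * ∑ ω ∈ univ.filter (fun ω' => Z ω' = z), p ω) :
    ∑ ω ∈ univ.filter (fun ω' => Z ω' = z), p ω * (π (A0 ω) / h (A0 ω) z) =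
      ∑ ω ∈ univ.filter (fun ω' => Z ω' = z), p ω := by
  set P := ∑ ω ∈ univ.filter (fun ω' => Z ω' = z), p ω
  have hjoint : ∀ a, (univ.filter (fun ω' => Z ω' = z)).filter (fun ω' => A0 ω' = a) =
      univ.filter (fun ω' => A0 ω' = a ∧ Z ω' = z) := fun a => by
    rw [filter_filter]; exact filter_congr fun _ _ => and_comm
  calc ∑ ω ∈ univ.filter (fun ω' => Z ω' = z), p ω * (π (A0 ω) / h (A0 ω) z)
      = ∑ a, ∑ ω ∈ univ.filter (fun ω' => A0 ω' = a ∧ Z ω' = z), p ω * (π a / h a z) := by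
        rw [← sum_fiberwise _ A0]
        refine sum_congr rfl fun a _ => ?_
        rw [hjoint]
        exact sum_congr rfl fun ω hω => by rw [(mem_filter.1 hω).2.1]
    _ = ∑ a, π a * P := by
        refine sum_congr rfl fun a _ => ?_
        rw [← sum_mul, hbayes]
        field_simp [hh a]
    _ = P := by rw [← sum_mul, hπ, one_mul]

theorem sum_mul_prior_div_posterior_mul [Fintype Ω] [Fintype A] (p : Ω → ℝ)
    (hp : ∀ ω, 0 ≤ p ω) (A0 : Ω → A) (Z : Ω → B) (π : A → ℝ) (hπ : ∑ a, π a = 1)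
    (h : A → B → ℝ)
    (hdef : ∀ a z, 0 < ∑ ω ∈ univ.filter (fun ω' => Z ω' = z), p ω →
      h a z = (∑ ω ∈ univ.filter (fun ω' => A0 ω' = a ∧ Z ω' = z), p ω) /
              (∑ ω ∈ univ.filter (fun ω' => Z ω' = z), p ω))
    (hpos : ∀ a z, 0 < ∑ ω ∈ univ.filter (fun ω' => Z ω' = z), p ω → 0 < h a z)
    (g : B → ℝ) :
    ∑ ω, p ω * (π (A0 ω) / h (A0 ω) (Z ω) * g (Z ω)) = ∑ ω, p ω * g (Z ω) := by
  have hfiber : ∀ z, ∑ ω ∈ univ.filter (fun ω' => Z ω' = z), p ω * (π (A0 ω) / h (A0 ω) z) =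
      ∑ ω ∈ univ.filter (fun ω' => Z ω' = z), p ω := fun z => by
    rcases (sum_nonneg fun ω _ => hp ω).eq_or_lt' with hz | hz
    · rw [hz, sum_mul_eq_zero_of_sum_eq_zero (fun ω _ => hp ω) hz]
    · exact sum_filter_mul_prior_div_posterior p A0 Z π hπ h z (fun a => (hpos a z hz).ne')
        fun a => by rw [hdef a z hz, div_mul_cancel₀ _ hz.ne']
  have hZ : ∀ ω ∈ univ, Z ω ∈ univ.image Z := fun ω _ => mem_image_of_mem Z (mem_univ ω)
  calc ∑ ω, p ω * (π (A0 ω) / h (A0 ω) (Z ω) * g (Z ω))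
      = ∑ z ∈ univ.image Z,
          (∑ ω ∈ univ.filter (fun ω' => Z ω' = z), p ω * (π (A0 ω) / h (A0 ω) z)) * g z := by
        rw [← sum_fiberwise_of_maps_to hZ]
        refine sum_congr rfl fun z _ => ?_
        rw [sum_mul]
        refine sum_congr rfl fun ω hω => ?_
        rw [(mem_filter.1 hω).2, mul_assoc]
    _ = ∑ ω, p ω * g (Z ω) := by
        simp_rw [hfiber, sum_mul]
        rw [← sum_fiberwise_of_maps_to hZ]
        refine sum_congr rfl fun z _ => sum_congr rfl fun ω hω => ?_
        rw [(mem_filter.1 hω).2]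

end

/-- Return-conditional HCA advantages average to zero under the policy
(Statement 12): on a finite probability space with `π a = P(A₀ = a) > 0` and
`h a z = P(A₀ = a | Z = z) > 0` on the support of `Z`,
`Σ_a π(a) · E[ (1 − π(a)/h(a|Z)) · Z | A₀ = a ] = 0`. -/
theorem stmt_12 {Ω A : Type*} [Fintype Ω] [Fintype A]
    (p : Ω → ℝ) (hp : ∀ ω, 0 ≤ p ω) (hsum : ∑ ω, p ω = 1)
    (A0 : Ω → A) (Z : Ω → ℝ) (π : A → ℝ)
    (hπ : ∀ a, π a = ∑ ω ∈ univ.filter (fun ω' => A0 ω' = a), p ω)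
    (hπpos : ∀ a, 0 < π a)
    (h : A → ℝ → ℝ)
    (hdef : ∀ a z, 0 < ∑ ω ∈ univ.filter (fun ω' => Z ω' = z), p ω →
      h a z = (∑ ω ∈ univ.filter (fun ω' => A0 ω' = a ∧ Z ω' = z), p ω) /
              (∑ ω ∈ univ.filter (fun ω' => Z ω' = z), p ω))
    (hpos : ∀ a z, 0 < ∑ ω ∈ univ.filter (fun ω' => Z ω' = z), p ω → 0 < h a z) :
    ∑ a, π a *
      ((∑ ω ∈ univ.filter (fun ω' => A0 ω' = a),
          p ω * ((1 - π a / h a (Z ω)) * Z ω)) / π a) = 0 := by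
  have hπsum : ∑ a, π a = 1 := by
    simp_rw [hπ]
    exact (sum_fiberwise univ A0 p).trans hsum
  rw [sum_mul_sum_fiber_div_cancel π (fun a => (hπpos a).ne') A0]
  simp_rw [one_sub_mul, mul_sub, sum_sub_distrib]
  rw [sub_eq_zero]
  exact (sum_mul_prior_div_posterior_mul p hp A0 Z π hπsum h hdef hpos id).symm
end

section
/- Let Ω be a finite probability space, A0 a random action with P(A0 = a) = π(a) > 0 for all a ∈ A, and Z a real random variable with finitely many values such that h(a|z) = P(A0 = a | Z = z) > 0 for all z in the support of Z and all a. Then Σ_a π(a) · E[ Z · π(a)/h(a|Z) | A0 = a ] = E[Z] if and only if E[ Z · π(a)/h(a|Z) | A0 = a ] = E[Z] for each a individually; moreover the latter holds (Theorem 2), so both hold. -/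
open Finset
open scoped Classical

/-!
Fibre over the values `z` of `Z`: on the fibre `{A₀ = a, Z = z}` the mass is
`P(A₀ = a, Z = z) = h(a|z) · P(Z = z)`, so the weight `π(a) / h(a|z)` turns it into
`π(a) · P(Z = z)`, and each conditional estimate equals `E[Z]`. As `Σ_a π(a) = 1`,
the averaged identity holds as well, so both sides of the equivalence are true.
-/

theorem Finset.sum_mul_comp_eq_sum_fiberwise {ι β R : Type*} [DecidableEq β] [CommSemiring R]
    {s : Finset ι} {t : Finset β} {Z : ι → β} (hZ : ∀ ω ∈ s, Z ω ∈ t) (p : ι → R) (F : β → R) :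
    ∑ ω ∈ s, p ω * F (Z ω) = ∑ z ∈ t, (∑ ω ∈ s with Z ω = z, p ω) * F z := by
  rw [← sum_fiberwise_of_maps_to hZ]
  refine sum_congr rfl fun z _ => ?_
  rw [sum_mul]
  exact sum_congr rfl fun ω hω => by rw [(mem_filter.1 hω).2]

theorem sum_filter_mul_div_condProb_eq_sum {Ω β : Type*} [Fintype Ω] [DecidableEq β]
    (p : Ω → ℝ) (hp : ∀ ω, 0 ≤ p ω) (E : Ω → Prop) [DecidablePred E] (Z : Ω → β) (f g : β → ℝ)
    (hg : ∀ z, 0 < ∑ ω ∈ univ.filter (fun ω' => Z ω' = z), p ω →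
      g z = (∑ ω ∈ univ.filter (fun ω' => E ω' ∧ Z ω' = z), p ω) /
              (∑ ω ∈ univ.filter (fun ω' => Z ω' = z), p ω))
    (hg_pos : ∀ z, 0 < ∑ ω ∈ univ.filter (fun ω' => Z ω' = z), p ω → 0 < g z) :
    ∑ ω ∈ univ.filter E, p ω * (f (Z ω) / g (Z ω)) = ∑ ω, p ω * f (Z ω) := by
  have hZ : ∀ ω, Z ω ∈ univ.image Z := fun ω => mem_image_of_mem Z (mem_univ ω)
  rw [sum_mul_comp_eq_sum_fiberwise (fun ω _ => hZ ω) p (fun z => f z / g z),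
    sum_mul_comp_eq_sum_fiberwise (fun ω _ => hZ ω) p f]
  refine sum_congr rfl fun z _ => ?_
  simp only [filter_filter]
  set S := ∑ ω ∈ univ.filter (fun ω' => Z ω' = z), p ω
  set T := ∑ ω ∈ univ.filter (fun ω' => E ω' ∧ Z ω' = z), p ω
  have hT_le : T ≤ S :=
    sum_le_sum_of_subset_of_nonneg (monotone_filter_right _ fun _ _ => And.right) fun ω _ _ => hp ω
  rcases (sum_nonneg fun ω _ => hp ω : 0 ≤ S).lt_or_eq with hS | hS
  · have hT : T = g z * S := by rw [hg z hS, div_mul_cancel₀ _ hS.ne']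
    have hg_ne : g z ≠ 0 := (hg_pos z hS).ne'
    rw [hT]
    field_simp
  · -- `g z` is unconstrained on a null fibre, but the fibre's mass vanishes
    have hS : S = 0 := hS.symm
    have hT : T = 0 := le_antisymm (hS ▸ hT_le) (sum_nonneg fun ω _ => hp ω)
    rw [hT, hS, zero_mul, zero_mul]

/-- Self-consistency of return-conditional hindsight value estimates
(Statement 15): with `π a = P(A₀ = a) > 0` for all `a` and
`h a z = P(A₀ = a | Z = z) > 0` on the support of `Z`,
`Σ_a π(a) · E[ Z · π(a)/h(a|Z) | A₀ = a ] = E[Z]` if and only if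
`E[ Z · π(a)/h(a|Z) | A₀ = a ] = E[Z]` for each `a`; moreover the latter
holds (Theorem 2), so both hold. -/
theorem stmt_15 {Ω A : Type*} [Fintype Ω] [Fintype A]
    (p : Ω → ℝ) (hp : ∀ ω, 0 ≤ p ω) (hsum : ∑ ω, p ω = 1)
    (A0 : Ω → A) (Z : Ω → ℝ) (π : A → ℝ)
    (hπ : ∀ a, π a = ∑ ω ∈ univ.filter (fun ω' => A0 ω' = a), p ω)
    (hπpos : ∀ a, 0 < π a)
    (h : A → ℝ → ℝ)
    (hdef : ∀ a z, 0 < ∑ ω ∈ univ.filter (fun ω' => Z ω' = z), p ω →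
      h a z = (∑ ω ∈ univ.filter (fun ω' => A0 ω' = a ∧ Z ω' = z), p ω) /
              (∑ ω ∈ univ.filter (fun ω' => Z ω' = z), p ω))
    (hpos : ∀ a z, 0 < ∑ ω ∈ univ.filter (fun ω' => Z ω' = z), p ω → 0 < h a z) :
    ((∑ a, π a *
        ((∑ ω ∈ univ.filter (fun ω' => A0 ω' = a),
            p ω * (Z ω * π a / h a (Z ω))) / π a)
        = ∑ ω, p ω * Z ω)
      ↔ (∀ a, (∑ ω ∈ univ.filter (fun ω' => A0 ω' = a),
            p ω * (Z ω * π a / h a (Z ω))) / π a = ∑ ω, p ω * Z ω)) ∧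
    (∀ a, (∑ ω ∈ univ.filter (fun ω' => A0 ω' = a),
        p ω * (Z ω * π a / h a (Z ω))) / π a = ∑ ω, p ω * Z ω) := by
  have each : ∀ a, (∑ ω ∈ univ.filter (fun ω' => A0 ω' = a),
      p ω * (Z ω * π a / h a (Z ω))) / π a = ∑ ω, p ω * Z ω := fun a => by
    rw [sum_filter_mul_div_condProb_eq_sum p hp (A0 · = a) Z (· * π a) (h a) (hdef a) (hpos a)]
    simp_rw [← mul_assoc, ← sum_mul]
    exact mul_div_cancel_right₀ _ (hπpos a).ne'
  have hπ_sum : ∑ a, π a = 1 := by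
    simp_rw [hπ]
    exact (sum_fiberwise univ A0 p).trans hsum
  refine ⟨iff_of_true ?_ each, each⟩
  simp_rw [each, ← sum_mul, hπ_sum, one_mul]
end
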